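/- arXiv:2503.12012 — 2 statements merged into one kernel-verified Lean document; each statement's English description precedes it below -/
import Mathlib

section
/- Let n ≥ 1, β ∈ ℝ^n, α ∈ ℝ, λ ≥ 0, x̂ ∈ ℝ^n, and γ_j > 0 for all j ∈ {1,…,n}. If |β_j| ≤ λγ_j for every j ∈ {1,…,n}, then sup_{x ∈ ℝ^n} [ log(1 + exp(−⟨β,x⟩ − α)) − λ·Σ_{j=1}^n γ_j|x_j − x̂_j| ] = log(1 + exp(−⟨β,x̂⟩ − α)); that is, for every x ∈ ℝ^n the expression log(1 + exp(−⟨β,x⟩ − α)) − λ·Σ_{j=1}^n γ_j|x_j − x̂_j| is at most log(1 + exp(−⟨β,x̂⟩ − α)), and this value is attained at x = x̂. -/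
lemma logexp_lip (a b : ℝ) :
    Real.log (1 + Real.exp a) - Real.log (1 + Real.exp b) ≤ |a - b| := by
  have h0 : (0:ℝ) < 1 + Real.exp b := by positivity
  have h1 : (1:ℝ) + Real.exp a ≤ Real.exp |a - b| * (1 + Real.exp b) := by
    have e1 : (1:ℝ) ≤ Real.exp |a - b| := Real.one_le_exp (abs_nonneg _)
    have e2 : Real.exp a ≤ Real.exp |a - b| * Real.exp b := by
      rw [← Real.exp_add]
      exact Real.exp_le_exp.2 (by have := le_abs_self (a - b); linarith)
    nlinarith [Real.exp_pos b]
  have h2 : Real.log (1 + Real.exp a) ≤ |a - b| + Real.log (1 + Real.exp b) := by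
    calc Real.log (1 + Real.exp a) ≤ Real.log (Real.exp |a - b| * (1 + Real.exp b)) :=
          Real.log_le_log (by positivity) h1
      _ = |a - b| + Real.log (1 + Real.exp b) := by
          rw [Real.log_mul (Real.exp_ne_zero _) (ne_of_gt h0), Real.log_exp]
  linarith

/-- Bounded case of the Lipschitz-regularized supremum lemma (weighted ℓ1 norm):
if `|β j| ≤ λ γ j` for all `j`, then the supremum over `x ∈ ℝ^n` of
`log(1 + exp(−⟨β,x⟩ − α)) − λ ∑ γ_j |x_j − x̂_j|` equals
`log(1 + exp(−⟨β,x̂⟩ − α))`, attained at `x = x̂`. -/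
theorem stmt0 (n : ℕ) (hn : 1 ≤ n) (β xhat γ : Fin n → ℝ) (α lam : ℝ)
    (hlam : 0 ≤ lam) (hγ : ∀ j, 0 < γ j) (hβ : ∀ j, |β j| ≤ lam * γ j) :
    IsGreatest
      (Set.range fun x : Fin n → ℝ =>
        Real.log (1 + Real.exp (-(∑ j, β j * x j) - α)) -
          lam * ∑ j, γ j * |x j - xhat j|)
      (Real.log (1 + Real.exp (-(∑ j, β j * xhat j) - α))) := by
  constructor
  · exact ⟨xhat, by simp⟩
  · rintro y ⟨x, rfl⟩
    dsimp only
    have hlip := logexp_lip (-(∑ j, β j * x j) - α) (-(∑ j, β j * xhat j) - α)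
    have habs : |(-(∑ j, β j * x j) - α) - (-(∑ j, β j * xhat j) - α)|
        ≤ lam * ∑ j, γ j * |x j - xhat j| := by
      have : (-(∑ j, β j * x j) - α) - (-(∑ j, β j * xhat j) - α)
          = ∑ j, β j * (xhat j - x j) := by
        simp only [mul_sub, Finset.sum_sub_distrib]
        ring
      rw [this, Finset.mul_sum]
      refine le_trans (Finset.abs_sum_le_sum_abs _ _) (Finset.sum_le_sum fun j _ => ?_)
      rw [abs_mul]
      have h1 : |xhat j - x j| = |x j - xhat j| := abs_sub_comm _ _
      rw [h1]
      have := hβ j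
      nlinarith [abs_nonneg (x j - xhat j), abs_nonneg (β j)]
    linarith
end

section
/- Let n ≥ 1, β ∈ ℝ^n, α ∈ ℝ, λ ≥ 0, x̂ ∈ ℝ^n, and γ_j > 0 for all j ∈ {1,…,n}. If there exists an index k ∈ {1,…,n} with |β_k| > λγ_k, then the function x ↦ log(1 + exp(−⟨β,x⟩ − α)) − λ·Σ_{j=1}^n γ_j|x_j − x̂_j| is unbounded above on ℝ^n; i.e., for every M ∈ ℝ there exists x ∈ ℝ^n with log(1 + exp(−⟨β,x⟩ − α)) − λ·Σ_{j=1}^n γ_j|x_j − x̂_j| > M. -/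
/-- Unbounded case of the Lipschitz-regularized supremum lemma (weighted ℓ1 norm):
if `|β k| > λ γ k` for some `k`, then
`x ↦ log(1 + exp(−⟨β,x⟩ − α)) − λ ∑ γ_j |x_j − x̂_j|` is unbounded above on `ℝ^n`. -/
theorem stmt1 (n : ℕ) (hn : 1 ≤ n) (β xhat γ : Fin n → ℝ) (α lam : ℝ)
    (hlam : 0 ≤ lam) (hγ : ∀ j, 0 < γ j) (hk : ∃ k, lam * γ k < |β k|) :
    ∀ M : ℝ, ∃ x : Fin n → ℝ,
      M < Real.log (1 + Real.exp (-(∑ j, β j * x j) - α)) -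
            lam * ∑ j, γ j * |x j - xhat j| := by
  obtain ⟨k, hk⟩ := hk
  intro M
  set S := ∑ j, β j * xhat j with hS
  have hd : 0 < |β k| - lam * γ k := by linarith
  set t : ℝ := (|M + α + S| + 1) / (|β k| - lam * γ k) with ht
  have ht0 : 0 ≤ t := div_nonneg (by positivity) hd.le
  have hβk : β k ≠ 0 := by
    intro h
    rw [h, abs_zero] at hk
    nlinarith [mul_nonneg hlam (hγ k).le]
  set x : Fin n → ℝ := fun j => if j = k then xhat k - t * Real.sign (β k) else xhat j
    with hx
  refine ⟨x, ?_⟩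
  have hxk : x k - xhat k = -(t * Real.sign (β k)) := by simp [hx]
  have hxj : ∀ j, j ≠ k → x j = xhat j := by intro j hj; simp [hx, hj]
  have key : ∀ c : Fin n → ℝ, ∑ j, c j * (x j - xhat j) = c k * (x k - xhat k) := by
    intro c
    apply Finset.sum_eq_single
    · intro j _ hj; rw [hxj j hj]; ring
    · simp
  have hsign : β k * Real.sign (β k) = |β k| := by
    rcases lt_or_gt_of_ne hβk with h | h
    · rw [Real.sign_of_neg h, abs_of_neg h]; ring
    · rw [Real.sign_of_pos h, abs_of_pos h]; ring
  have habs : |Real.sign (β k)| = 1 := by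
    rcases lt_or_gt_of_ne hβk with h | h
    · rw [Real.sign_of_neg h]; simp
    · rw [Real.sign_of_pos h]; simp
  have hsum1 : ∑ j, β j * x j = S - t * |β k| := by
    have h1 : ∑ j, β j * x j = ∑ j, (β j * xhat j + β j * (x j - xhat j)) := by
      apply Finset.sum_congr rfl; intro j _; ring
    rw [h1, Finset.sum_add_distrib, key β, hxk, ← hS]
    have h2 : β k * -(t * Real.sign (β k)) = -(t * |β k|) := by rw [← hsign]; ring
    rw [h2]; ring
  have hsum2 : ∑ j, γ j * |x j - xhat j| = γ k * t := by
    have h1 : ∑ j, γ j * |x j - xhat j| = γ k * |x k - xhat k| := by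
      apply Finset.sum_eq_single
      · intro j _ hj; rw [hxj j hj]; simp
      · simp
    rw [h1, hxk, abs_neg, abs_mul, habs, abs_of_nonneg ht0]; ring
  rw [hsum1, hsum2]
  have hlog : t * |β k| - S - α < Real.log (1 + Real.exp (-(S - t * |β k|) - α)) := by
    have : t * |β k| - S - α = Real.log (Real.exp (-(S - t * |β k|) - α)) := by
      rw [Real.log_exp]; ring
    rw [this]
    exact Real.log_lt_log (Real.exp_pos _) (by linarith [Real.exp_pos (-(S - t * |β k|) - α)])
  have hmul : t * (|β k| - lam * γ k) = |M + α + S| + 1 := by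
    rw [ht, div_mul_cancel₀ _ hd.ne']
  have habsM : M + α + S ≤ |M + α + S| := le_abs_self _
  nlinarith [hlog, hmul]
end
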